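/- Let p be an odd prime, let F be a finite field of cardinality q = p^f, and let G = PSL₂(F). Let H be a subgroup of G of odd order such that p divides |H| and |H| is not a power of p. Then the action of G on the set of right cosets of H by right multiplication is not binary. -/

import Mathlib

/-
An element `u ∈ H` of order `p` has a square `w = u²` that lifts to a nontrivial unipotent
`W ∈ SL₂(F)`. Since `W - 1` is a nonzero square-zero matrix, some `g ∈ SL₂(F)` makes
`g W² g⁻¹ W` traceless; a traceless element of `SL₂(F)` squares to `-1`, so with `x` the image
of `g` the element `τ = x w² x⁻¹ w` is an involution of `PSL₂(F)`.
Any two of the cosets `Hx, Hxw², H` can be moved simultaneously to the corresponding two of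
`Hxw², Hx, H`, so a binary action would give `ρ ∈ H` swapping `Hx` and `Hxw²`. Then
`x ρ² x⁻¹ ∈ H`, hence `x ρ x⁻¹ ∈ H` as `ρ` has odd order, hence `τ ∈ H`: an involution in a
group of odd order.
-/

open scoped Pointwise MatrixGroups

/-- Right multiplication action of `g : G` on the set of right cosets of `H` in `G`. -/
def rightCosetMul {G : Type*} [Group G] (H : Subgroup G) (g : G) :
    Quotient (QuotientGroup.rightRel H) → Quotient (QuotientGroup.rightRel H) :=
  Quotient.map (fun x => x * g) (fun x y h => by
    have h' := QuotientGroup.rightRel_apply.mp h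
    exact QuotientGroup.rightRel_apply.mpr (by simpa [mul_assoc] using h'))

/-- The action of `G` on the right cosets of `H` is binary. -/
def IsBinaryCosetAction {G : Type*} [Group G] (H : Subgroup G) : Prop :=
  ∀ (n : ℕ) (I J : Fin n → Quotient (QuotientGroup.rightRel H)),
    (∀ i j : Fin n, ∃ g : G,
        rightCosetMul H g (I i) = J i ∧ rightCosetMul H g (I j) = J j) →
    ∃ g : G, ∀ k, rightCosetMul H g (I k) = J k

/-- The adjacency relation of the graph `Γ(C)`. -/
def gammaAdj {G : Type*} [Group G] (C : Set G) (x y : G) : Prop :=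
  x ∈ C ∧ y ∈ C ∧ x ≠ y ∧ Commute x y ∧ (x * y⁻¹ ∈ C ∨ y * x⁻¹ ∈ C)

section CosetAction

variable {G : Type*} [Group G] (H : Subgroup G)

lemma rightCosetMul_mk_eq_mk_iff {g a b : G} :
    rightCosetMul H g (Quotient.mk (QuotientGroup.rightRel H) a) =
        Quotient.mk (QuotientGroup.rightRel H) b ↔ b * g⁻¹ * a⁻¹ ∈ H := by
  rw [rightCosetMul, Quotient.map_mk, Quotient.eq, QuotientGroup.rightRel_apply, mul_inv_rev,
    mul_assoc]

variable {H}

lemma IsBinaryCosetAction.exists_swap_fixing (hbin : IsBinaryCosetAction H)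
    {P Q R : Quotient (QuotientGroup.rightRel H)} {g s : G}
    (hgP : rightCosetMul H g P = Q) (hgR : rightCosetMul H g R = R)
    (hgQ : rightCosetMul H g⁻¹ Q = P) (hgR' : rightCosetMul H g⁻¹ R = R)
    (hsP : rightCosetMul H s P = Q) (hsQ : rightCosetMul H s Q = P) :
    ∃ ρ : G, rightCosetMul H ρ P = Q ∧ rightCosetMul H ρ Q = P ∧ rightCosetMul H ρ R = R := by
  obtain ⟨ρ, hρ⟩ := hbin 3 ![P, Q, R] ![Q, P, R] <| by
    intro i j
    fin_cases i <;> fin_cases j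
    exacts [⟨g, hgP, hgP⟩, ⟨s, hsP, hsQ⟩, ⟨g, hgP, hgR⟩, ⟨s, hsQ, hsP⟩, ⟨g⁻¹, hgQ, hgQ⟩,
      ⟨g⁻¹, hgQ, hgR'⟩, ⟨g, hgR, hgP⟩, ⟨g⁻¹, hgR', hgQ⟩, ⟨g, hgR, hgR⟩]
  exact ⟨ρ, hρ 0, hρ 1, hρ 2⟩

end CosetAction

lemma exists_sq_pow_eq_self_of_odd_orderOf {G : Type*} [Group G] {g : G}
    (hg : Odd (orderOf g)) :
    ∃ n : ℕ, (g ^ 2) ^ n = g := by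
  obtain ⟨k, hk⟩ := hg
  refine ⟨k + 1, ?_⟩
  rw [← pow_mul, show 2 * (k + 1) = orderOf g + 1 by omega, pow_succ, pow_orderOf_eq_one,
    one_mul]

lemma Subgroup.odd_orderOf_of_odd_card {G : Type*} [Group G] {H : Subgroup G}
    (hH : Odd (Nat.card H)) {g : G} (hg : g ∈ H) : Odd (orderOf g) :=
  hH.of_dvd_nat (H.orderOf_dvd_natCard hg)

theorem not_isBinaryCosetAction_of_orderOf_eq_two {G : Type*} [Group G] {H : Subgroup G}
    (hH : Odd (Nat.card H)) {a b x : G} (ha : a ∈ H) (hb : b ∈ H)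
    (hτ : orderOf (x * a * x⁻¹ * b) = 2) : ¬ IsBinaryCosetAction H := by
  intro hbin
  have hτinv : b⁻¹ * x * a⁻¹ * x⁻¹ = x * a * x⁻¹ * b := by
    simpa only [mul_inv_rev, inv_inv, mul_assoc] using inv_eq_self_of_orderOf_eq_two hτ
  -- `a` moves `Hx` to `Hxa` and fixes `H`; `x⁻¹ b x a` swaps `Hx` and `Hxa` because `τ⁻¹ = τ`.
  obtain ⟨ρ, hρx, hρxa, hρ1⟩ := hbin.exists_swap_fixing
    (P := Quotient.mk _ x) (Q := Quotient.mk _ (x * a)) (R := Quotient.mk _ 1)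
    (g := a) (s := x⁻¹ * b * x * a)
    (by simp [rightCosetMul_mk_eq_mk_iff])
    (by simp [rightCosetMul_mk_eq_mk_iff, ha])
    (by simp [rightCosetMul_mk_eq_mk_iff, mul_assoc])
    (by simp [rightCosetMul_mk_eq_mk_iff, ha])
    (by simp [rightCosetMul_mk_eq_mk_iff, mul_assoc, hb])
    (by
      rw [rightCosetMul_mk_eq_mk_iff]
      convert hb using 1
      calc x * (x⁻¹ * b * x * a)⁻¹ * (x * a)⁻¹
          = x * a⁻¹ * x⁻¹ * (b⁻¹ * x * a⁻¹ * x⁻¹) := by group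
        _ = b := by rw [hτinv]; group)
  rw [rightCosetMul_mk_eq_mk_iff] at hρx hρxa hρ1
  have hρ : ρ ∈ H := by simpa using hρ1
  have hρsq : x * ρ ^ 2 * x⁻¹ ∈ H := by
    convert H.inv_mem (H.mul_mem hρxa hρx) using 1
    group
  -- `ρ ∈ H` has odd order, so it is a power of `ρ ^ 2`.
  have hρconj : x * ρ * x⁻¹ ∈ H := by
    obtain ⟨n, hn⟩ :=
      exists_sq_pow_eq_self_of_odd_orderOf (Subgroup.odd_orderOf_of_odd_card hH hρ)
    rw [← hn, ← conj_pow]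
    exact H.pow_mem hρsq n
  have hτH : x * a * x⁻¹ * b ∈ H := by
    convert H.mul_mem (H.mul_mem hρx hρconj) hb using 2
    group
  have := Subgroup.odd_orderOf_of_odd_card hH hτH
  rw [hτ] at this
  exact Nat.not_odd_iff_even.mpr even_two this

namespace Matrix

variable {F : Type*} [Field F]

lemma mul_self_fin_two {R : Type*} [CommRing R] (A : Matrix (Fin 2) (Fin 2) R) :
    A * A = A.trace • A - A.det • 1 := by
  ext i j
  fin_cases i <;> fin_cases j <;>
    simp [mul_apply, Fin.sum_univ_two, trace_fin_two, det_fin_two] <;> ring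

lemma exists_trace_conj_mul_eq_neg_one {X : Matrix (Fin 2) (Fin 2) F} (htr : X.trace = 0)
    (hdet : X.det = 0) (hX : X ≠ 0) :
    ∃ g : SL(2, F), ((g : Matrix (Fin 2) (Fin 2) F) * X * (g⁻¹ : SL(2, F)) * X).trace = -1 := by
  obtain ⟨b, c, d, rfl⟩ : ∃ b c d : F, X = !![b, c; d, -b] :=
    ⟨X 0 0, X 0 1, X 1 0, by
      rw [trace_fin_two] at htr
      conv_lhs => rw [eta_fin_two X, eq_neg_of_add_eq_zero_right htr]⟩
  rw [det_fin_two_of] at hdet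
  -- Conjugating by a unitriangular matrix with off-diagonal entry `t` gives trace `-(t c)²`
  -- (lower) or `-(t d)²` (upper), using `b² + c d = 0`.
  by_cases hc : c = 0
  · have hd : d ≠ 0 := by
      rintro rfl
      obtain rfl : b = 0 := by simpa [hc] using hdet
      exact hX (by simp [hc, ← Matrix.ext_iff, Fin.forall_fin_two])
    obtain ⟨g, hg⟩ : ∃ g : SL(2, F), (g : Matrix (Fin 2) (Fin 2) F) = !![1, d⁻¹; 0, 1] :=
      ⟨⟨_, by simp⟩, rfl⟩
    refine ⟨g, ?_⟩
    rw [SpecialLinearGroup.coe_inv, hg, adjugate_fin_two_of]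
    simp only [mul_fin_two, trace_fin_two_of]
    field_simp
    linear_combination (-2 * d) * hdet
  · obtain ⟨g, hg⟩ : ∃ g : SL(2, F), (g : Matrix (Fin 2) (Fin 2) F) = !![1, 0; c⁻¹, 1] :=
      ⟨⟨_, by simp⟩, rfl⟩
    refine ⟨g, ?_⟩
    rw [SpecialLinearGroup.coe_inv, hg, adjugate_fin_two_of]
    simp only [mul_fin_two, trace_fin_two_of]
    field_simp
    linear_combination (-2 * c) * hdet

namespace SpecialLinearGroup

lemma isNilpotent_coe_sub_one {n R : Type*} [Fintype n] [DecidableEq n] [Nonempty n]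
    [CommRing R] {p : ℕ} [Fact p.Prime] [CharP R p] {W : SpecialLinearGroup n R}
    (hW : W ^ p = 1) : IsNilpotent ((W : Matrix n n R) - 1) :=
  ⟨p, by rw [sub_pow_char_of_commute _ (Commute.one_right _), ← coe_pow, hW, coe_one, one_pow,
    sub_self]⟩

lemma exists_trace_conj_sq_mul_eq_zero {V : SL(2, F)}
    (hV : IsNilpotent ((V : Matrix (Fin 2) (Fin 2) F) - 1)) (hV1 : V ≠ 1) :
    ∃ g : SL(2, F), ((g * V ^ 2 * g⁻¹ * V : SL(2, F)) : Matrix (Fin 2) (Fin 2) F).trace = 0 := by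
  set X := (V : Matrix (Fin 2) (Fin 2) F) - 1 with hX
  have htr : X.trace = 0 := (isNilpotent_trace_of_isNilpotent hV).eq_zero
  have hdet : X.det = 0 := by
    obtain ⟨k, hk⟩ := hV
    exact IsNilpotent.eq_zero ⟨k, by rw [← det_pow, hk, det_zero]⟩
  have hXX : X * X = 0 := by simp [mul_self_fin_two, htr, hdet]
  have hX0 : X ≠ 0 := fun h ↦ hV1 (Subtype.ext (sub_eq_zero.mp h))
  obtain ⟨g, hg⟩ := exists_trace_conj_mul_eq_neg_one htr hdet hX0
  refine ⟨g, ?_⟩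
  set G := (g : Matrix (Fin 2) (Fin 2) F)
  set G' := ((g⁻¹ : SL(2, F)) : Matrix (Fin 2) (Fin 2) F)
  have hGG' : G * G' = 1 := by rw [← coe_mul, mul_inv_cancel, coe_one]
  have hG'G : G' * G = 1 := by rw [← coe_mul, inv_mul_cancel, coe_one]
  have hconj : (G * X * G').trace = 0 := by
    rw [trace_mul_comm, ← Matrix.mul_assoc, hG'G, Matrix.one_mul, htr]
  -- With `X² = 0`, `g V² g⁻¹ V = (1 + 2 gXg⁻¹)(1 + X)`.
  have hexpand : ((g * V ^ 2 * g⁻¹ * V : SL(2, F)) : Matrix (Fin 2) (Fin 2) F) =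
      1 + X + 2 • (G * X * G') + 2 • (G * X * G' * X) := by
    rw [coe_mul, coe_mul, coe_mul, coe_pow, show (V : Matrix (Fin 2) (Fin 2) F) = 1 + X by
      rw [hX, add_sub_cancel]]
    calc G * (1 + X) ^ 2 * G' * (1 + X)
        = (G * G' + 2 • (G * X * G') + G * (X * X) * G') * (1 + X) := by noncomm_ring
      _ = 1 + X + 2 • (G * X * G') + 2 • (G * X * G' * X) := by
        rw [hGG', hXX]; noncomm_ring
  rw [hexpand, trace_add, trace_add, trace_add, trace_smul, trace_smul, hconj, hg, htr]
  norm_num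

lemma orderOf_mk_eq_two_of_trace_eq_zero (h2 : (2 : F) ≠ 0) {T : SL(2, F)}
    (hT : (T : Matrix (Fin 2) (Fin 2) F).trace = 0) : orderOf (T : PSL(2, F)) = 2 := by
  apply orderOf_eq_prime
  · have hTT : T * T = -1 := Subtype.ext <| by
      simp [mul_self_fin_two, hT, coe_neg]
    rw [sq, ← QuotientGroup.mk_mul, hTT, QuotientGroup.eq_one_iff]
    exact Subgroup.mem_center_iff.mpr fun g ↦ by simp
  · rw [Ne, QuotientGroup.eq_one_iff, mem_center_iff]
    rintro ⟨r, hr, hrT⟩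
    have hr0 : r = 0 := by simpa [← hrT, h2] using hT
    simp [hr0] at hr

end SpecialLinearGroup

/-- A lift `V` of `u` only satisfies `V ^ n = ± 1`; squaring removes the sign. -/
lemma ProjectiveSpecialLinearGroup.exists_lift_sq_pow_eq_one {R : Type*} [CommRing R]
    {u : PSL(2, R)} {n : ℕ} (hu : u ^ n = 1) :
    ∃ W : SL(2, R), (W : PSL(2, R)) = u ^ 2 ∧ W ^ n = 1 := by
  obtain ⟨V, rfl⟩ := QuotientGroup.mk_surjective u
  have hVn : V ^ n ∈ Subgroup.center SL(2, R) := by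
    rwa [← QuotientGroup.eq_one_iff, QuotientGroup.mk_pow]
  obtain ⟨r, hr, hrV⟩ := SpecialLinearGroup.mem_center_iff.mp hVn
  refine ⟨V ^ 2, QuotientGroup.mk_pow _ V 2, Subtype.ext ?_⟩
  rw [← pow_mul, mul_comm, pow_mul, SpecialLinearGroup.coe_pow, ← hrV, ← map_pow]
  simp_all

end Matrix

theorem stmt12_general {p f : ℕ} (hp : p.Prime) (hpodd : Odd p)
    {F : Type*} [Field F] [Fintype F] (hF : Fintype.card F = p ^ f)
    (H : Subgroup (Matrix.ProjectiveSpecialLinearGroup (Fin 2) F))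
    (hHodd : Odd (Nat.card H)) (hpH : p ∣ Nat.card H) :
    ¬ IsBinaryCosetAction H := by
  have := Fact.mk hp
  have := charP_of_card_eq_prime_pow hF
  have hp2 : p ≠ 2 := by rintro rfl; exact Nat.not_odd_iff_even.mpr even_two hpodd
  have h2 : (2 : F) ≠ 0 := Ring.two_ne_zero (by rwa [ringChar.eq F p])
  have : Finite H := Nat.finite_of_card_ne_zero hHodd.pos.ne'
  obtain ⟨u, hu⟩ := exists_prime_orderOf_dvd_card' p hpH
  rw [← Subgroup.orderOf_coe] at hu
  obtain ⟨W, hWu, hWp⟩ := Matrix.ProjectiveSpecialLinearGroup.exists_lift_sq_pow_eq_one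
    (hu ▸ pow_orderOf_eq_one (u : PSL(2, F)))
  have hW1 : W ≠ 1 := by
    rintro rfl
    have hdvd : p ∣ 2 := hu ▸ orderOf_dvd_of_pow_eq_one (by simpa using hWu.symm)
    exact hp2 ((Nat.prime_dvd_prime_iff_eq hp Nat.prime_two).mp hdvd)
  obtain ⟨x, hx⟩ := Matrix.SpecialLinearGroup.exists_trace_conj_sq_mul_eq_zero
    (Matrix.SpecialLinearGroup.isNilpotent_coe_sub_one hWp) hW1
  have := Matrix.SpecialLinearGroup.orderOf_mk_eq_two_of_trace_eq_zero h2 hx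
  simp only [QuotientGroup.mk_mul, QuotientGroup.mk_inv, QuotientGroup.mk_pow, hWu] at this
  exact not_isBinaryCosetAction_of_orderOf_eq_two hHodd (H.pow_mem (H.pow_mem u.2 2) 2)
    (H.pow_mem u.2 2) this

theorem stmt12 {p f : ℕ} (hp : p.Prime) (hpodd : Odd p)
    {F : Type*} [Field F] [Fintype F] (hF : Fintype.card F = p ^ f)
    (H : Subgroup (Matrix.ProjectiveSpecialLinearGroup (Fin 2) F))
    (hHodd : Odd (Nat.card H)) (hpH : p ∣ Nat.card H)
    (hnotp : ∀ k : ℕ, Nat.card H ≠ p ^ k) :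
    ¬ IsBinaryCosetAction H :=
  stmt12_general hp hpodd hF H hHodd hpH
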